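/- arXiv:1301.3275 — 3 statements merged into one kernel-verified Lean document; each statement's English description precedes it below -/
import Mathlib

section
/- Let S be a finite involutory semigroup. Then exactly one of the following two assertions holds: (A) there exists an idempotent e ∈ S such that it is NOT the case that e ≤_J e*·e; (B) there exists a positive integer N such that x^N = (x^N·(x^N)*)^N·x^N for all x ∈ S. -/
/-- `a ≤_J b`: `a` lies in the two-sided ideal generated by `b`. -/
def leJ {S : Type*} [Semigroup S] (a b : S) : Prop :=
  a = b ∨ (∃ u, a = b * u) ∨ (∃ u, a = u * b) ∨ (∃ u v, a = u * b * v)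

/-- `spow x N` is the `N`-th power of `x` in a semigroup, for `N ≥ 1`
(with the harmless convention `spow x 0 = x`). -/
def spow {S : Type*} [Semigroup S] (x : S) : ℕ → S
  | 0 => x
  | 1 => x
  | (n + 2) => spow x (n + 1) * x

section Aux
variable {S : Type*} [Semigroup S]

theorem spow_one (x : S) : spow x 1 = x := rfl

theorem spow_succ (x : S) (n : ℕ) : spow x (n + 2) = spow x (n + 1) * x := rfl

theorem spow_succ' (x : S) (n : ℕ) (hn : 1 ≤ n) : spow x (n + 1) = spow x n * x := by
  cases n with
  | zero => omega
  | succ k => rfl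

theorem spow_succ_left (x : S) : ∀ n, 1 ≤ n → spow x (n + 1) = x * spow x n
  | 1, _ => rfl
  | (n + 2), _ => by
    calc spow x (n + 3) = spow x (n + 2) * x := rfl
    _ = (x * spow x (n + 1)) * x := by rw [← spow_succ_left x (n + 1) (by omega)]
    _ = x * (spow x (n + 1) * x) := mul_assoc _ _ _
    _ = x * spow x (n + 2) := rfl

theorem spow_add (x : S) (m : ℕ) (hm : 1 ≤ m) : ∀ n, 1 ≤ n → spow x (m + n) = spow x m * spow x n
  | 1, _ => by rw [spow_one, spow_succ' x m hm]
  | (n + 2), _ => by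
    have h1 : m + (n + 2) = (m + (n + 1)) + 1 := by omega
    rw [h1, spow_succ' x (m + (n + 1)) (by omega), spow_add x m hm (n + 1) (by omega),
      mul_assoc, ← spow_succ x n]

theorem exists_good_N (S : Type*) [Semigroup S] [Finite S] :
    ∃ N, 0 < N ∧ ∀ y : S, spow y N * spow y N = spow y N := by
  cases nonempty_fintype S
  set M := Fintype.card S with hMdef
  refine ⟨Nat.factorial M, Nat.factorial_pos M, ?_⟩
  intro y
  have key : ∀ i j : ℕ, i < j → j ≤ M → spow y (i + 1) = spow y (j + 1) →
      spow y (Nat.factorial M) * spow y (Nat.factorial M) = spow y (Nat.factorial M) := by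
    intro i j hij hjM heq
    set d := j - i with hd
    have hper : ∀ k : ℕ, spow y ((i + 1 + k) + d) = spow y (i + 1 + k) := by
      intro k
      induction k with
      | zero =>
        have h1 : i + 1 + 0 + d = j + 1 := by omega
        have h2 : i + 1 + 0 = i + 1 := by omega
        rw [h1, h2]; exact heq.symm
      | succ k ih =>
        have h1 : i + 1 + (k + 1) + d = (i + 1 + k + d) + 1 := by omega
        have h2 : i + 1 + (k + 1) = (i + 1 + k) + 1 := by omega
        rw [h1, h2, spow_succ' y (i + 1 + k + d) (by omega),
          spow_succ' y (i + 1 + k) (by omega), ih]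
    have hper' : ∀ m : ℕ, i + 1 ≤ m → spow y (m + d) = spow y m := by
      intro m hm
      obtain ⟨k, rfl⟩ : ∃ k, m = i + 1 + k := ⟨m - (i + 1), by omega⟩
      exact hper k
    have hmult : ∀ c m : ℕ, i + 1 ≤ m → spow y (m + c * d) = spow y m := by
      intro c
      induction c with
      | zero => intro m _; simp
      | succ c ih =>
        intro m hm
        have h1 : m + (c + 1) * d = (m + c * d) + d := by ring
        rw [h1, hper' (m + c * d) (by omega), ih m hm]
    have hdvd : d ∣ Nat.factorial M := Nat.dvd_factorial (by omega) (by omega)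
    obtain ⟨c, hc⟩ := hdvd
    have hMle : i + 1 ≤ Nat.factorial M := le_trans (by omega) (Nat.self_le_factorial M)
    have h1 : Nat.factorial M + Nat.factorial M = Nat.factorial M + c * d := by
      rw [Nat.mul_comm, ← hc]
    rw [← spow_add y (Nat.factorial M) (Nat.factorial_pos M) (Nat.factorial M)
      (Nat.factorial_pos M), h1, hmult c (Nat.factorial M) hMle]
  obtain ⟨i, j, hne, heq⟩ := Fintype.exists_ne_map_eq_of_card_lt
    (fun k : Fin (M + 1) => spow y (k.val + 1))
    (by rw [Fintype.card_fin, ← hMdef]; exact Nat.lt_succ_self M)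
  rcases lt_trichotomy i.val j.val with h | h | h
  · exact key i.val j.val h (by omega) heq
  · exact absurd (Fin.ext h) hne
  · exact key j.val i.val h (by omega) heq.symm

theorem sandwich (s u t : S) (h : s = u * s * t) :
    ∀ n, 1 ≤ n → s = spow u n * s * spow t n
  | 1, _ => h
  | (n + 2), _ => by
    have ih := sandwich s u t h (n + 1) (by omega)
    calc s = u * s * t := h
    _ = u * (spow u (n + 1) * s * spow t (n + 1)) * t := by rw [← ih]
    _ = (u * spow u (n + 1)) * s * (spow t (n + 1) * t) := by simp [mul_assoc]
    _ = spow u (n + 2) * s * spow t (n + 2) := by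
        rw [← spow_succ_left u (n + 1) (by omega), ← spow_succ t n]

theorem absorb_right [Finite S] (s t : S) (h : ∃ u, s = u * s * t) :
    ∃ n, 1 ≤ n ∧ s = s * spow t n := by
  obtain ⟨u, h⟩ := h
  obtain ⟨N, hN0, hNidem⟩ := exists_good_N S
  have h1 := sandwich s u t h N hN0
  refine ⟨N, hN0, ?_⟩
  calc s = spow u N * s * spow t N := h1
  _ = spow u N * s * (spow t N * spow t N) := by rw [hNidem t]
  _ = (spow u N * s * spow t N) * spow t N := by simp [mul_assoc]
  _ = s * spow t N := by rw [← h1]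

theorem self_mul_spow (s t : S) : ∀ n, 1 ≤ n → s = s * spow t n → ∃ w, s = s * t * w
  | 1, _, h => by
    refine ⟨t, ?_⟩
    rw [spow_one] at h
    calc s = s * t := h
    _ = (s * t) * t := by conv_lhs => rw [h]
  | (n + 2), _, h => by
    refine ⟨spow t (n + 1), ?_⟩
    rw [spow_succ_left t (n + 1) (by omega), ← mul_assoc] at h
    exact h

theorem factR [Finite S] (s t : S) (h : leJ s (s * t)) : ∃ w, s = s * t * w := by
  rcases h with h | ⟨u, h⟩ | ⟨u, h⟩ | ⟨u, v, h⟩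
  · refine ⟨t, ?_⟩
    calc s = s * t := h
    _ = (s * t) * t := by conv_lhs => rw [h]
  · exact ⟨u, h⟩
  · have h' : s = u * s * t := by rw [mul_assoc]; exact h
    obtain ⟨n, hn, hs⟩ := absorb_right s t ⟨u, h'⟩
    exact self_mul_spow s t n hn hs
  · have h' : s = u * s * (t * v) := by
      calc s = u * (s * t) * v := h
      _ = u * s * (t * v) := by simp [mul_assoc]
    obtain ⟨n, hn, hs⟩ := absorb_right s (t * v) ⟨u, h'⟩
    obtain ⟨w, hw⟩ := self_mul_spow s (t * v) n hn hs
    refine ⟨v * w, ?_⟩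
    calc s = s * (t * v) * w := hw
    _ = s * t * (v * w) := by simp [mul_assoc]

theorem leJ_star [StarMul S] (a b : S) (h : leJ a b) : leJ (star a) (star b) := by
  rcases h with h | ⟨u, h⟩ | ⟨u, h⟩ | ⟨u, v, h⟩
  · exact Or.inl (by rw [h])
  · exact Or.inr (Or.inr (Or.inl ⟨star u, by rw [h, star_mul]⟩))
  · exact Or.inr (Or.inl ⟨star u, by rw [h, star_mul]⟩)
  · exact Or.inr (Or.inr (Or.inr ⟨star v, star u, by rw [h]; simp [star_mul, mul_assoc]⟩))

theorem factL [Finite S] [StarMul S] (s t : S) (h : leJ s (t * s)) :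
    ∃ l, s = l * (t * s) := by
  have h2 : leJ (star s) (star s * star t) := by
    have := leJ_star s (t * s) h
    rwa [star_mul] at this
  obtain ⟨w, hw⟩ := factR (star s) (star t) h2
  refine ⟨star w, ?_⟩
  have := congrArg star hw
  rwa [star_star, star_mul, star_mul, star_star, star_star] at this

theorem spow_idem (e : S) (hee : e * e = e) : ∀ n, spow e n = e
  | 0 => rfl
  | 1 => rfl
  | (n + 2) => by rw [spow_succ, spow_idem e hee (n + 1), hee]

theorem form_lemma [StarMul S] (e : S) :
    ∀ k, 1 ≤ k → ∃ u, spow (e * star e) k * e = u * (star e * e)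
  | 1, _ => ⟨e, by rw [spow_one]; simp [mul_assoc]⟩
  | (k + 2), _ => ⟨spow (e * star e) (k + 1) * e, by rw [spow_succ]; simp [mul_assoc]⟩

theorem notA_imp_B [Finite S] [StarMul S]
    (H : ∀ e : S, e * e = e → leJ e (star e * e)) :
    ∃ N : ℕ, 0 < N ∧
      ∀ x : S, spow x N = spow (spow x N * star (spow x N)) N * spow x N := by
  obtain ⟨N, hN0, hidem⟩ := exists_good_N S
  refine ⟨N, hN0, ?_⟩
  intro x
  obtain ⟨e, he⟩ : ∃ e', e' = spow x N := ⟨_, rfl⟩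
  rw [← he]
  have hee : e * e = e := by rw [he]; exact hidem x
  have hestar : star e * star e = star e := by rw [← star_mul, hee]
  have h1 : leJ e (star e * e) := H e hee
  have h2 : leJ (star e) (e * star e) := by
    have := H (star e) hestar
    rwa [star_star] at this
  have h3 : leJ e (e * star e) := by
    have := leJ_star (star e) (e * star e) h2
    rwa [star_star, star_mul, star_star] at this
  obtain ⟨l, hl⟩ := factL e (star e) h1
  obtain ⟨v, hv⟩ := factL (star e) e h2
  obtain ⟨w, hw⟩ := factR e (star e) h3
  obtain ⟨a, ha⟩ : ∃ a', a' = e * star e := ⟨_, rfl⟩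
  rw [← ha] at hv hw ⊢
  have hastar : star a = a := by rw [ha, star_mul, star_star, ← ha]
  have h4 : a = (l * v) * (a * a) := by
    calc a = e * star e := ha
    _ = (l * (star e * e)) * star e := by nth_rewrite 1 [hl]; rfl
    _ = l * ((star e * e) * star e) := mul_assoc _ _ _
    _ = l * (star e * (e * star e)) := by rw [mul_assoc (star e) e (star e)]
    _ = l * (star e * a) := by rw [← ha]
    _ = l * ((v * a) * a) := by rw [hv]
    _ = (l * v) * (a * a) := by simp [mul_assoc]
  obtain ⟨c, hcc⟩ : ∃ c', c' = star (l * v) := ⟨_, rfl⟩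
  have key : a = a * a * c := by
    calc a = star a := hastar.symm
    _ = star ((l * v) * (a * a)) := by rw [← h4]
    _ = (star a * star a) * star (l * v) := by rw [star_mul, star_mul]
    _ = a * a * c := by rw [hastar, ← hcc]
  have pl : ∀ n, 1 ≤ n → a = spow a (n + 1) * spow c n := by
    intro n hn
    induction n with
    | zero => omega
    | succ k ih =>
      rcases Nat.eq_zero_or_pos k with rfl | hk
      · exact key
      · have ihk := ih hk
        have goal2 : spow a (k + 2) * spow c (k + 1) = a := by
          calc spow a (k + 2) * spow c (k + 1)
              = (spow a k * spow a 2) * (c * spow c k) := by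
                rw [spow_add a k hk 2 (by omega), spow_succ_left c k hk]
          _ = (spow a k * (a * a)) * (c * spow c k) := by rw [spow_succ, spow_one]
          _ = spow a k * ((a * a * c) * spow c k) := by simp [mul_assoc]
          _ = spow a k * (a * spow c k) := by rw [← key]
          _ = spow a (k + 1) * spow c k := by rw [spow_succ' a k hk, mul_assoc]
          _ = a := ihk.symm
        exact goal2.symm
  have pa : spow a N * a = a := by
    have hNplus : spow a N * spow a (N + 1) = spow a (N + 1) := by
      rw [spow_succ' a N hN0, ← mul_assoc, hidem a]
    calc spow a N * a = spow a N * (spow a (N + 1) * spow c N) := by rw [← pl N hN0]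
    _ = (spow a N * spow a (N + 1)) * spow c N := by rw [mul_assoc]
    _ = spow a (N + 1) * spow c N := by rw [hNplus]
    _ = a := (pl N hN0).symm
  calc e = a * w := hw
  _ = (spow a N * a) * w := by rw [pa]
  _ = spow a N * (a * w) := mul_assoc _ _ _
  _ = spow a N * e := by rw [← hw]

theorem B_imp_notA [StarMul S]
    (hB : ∃ N : ℕ, 0 < N ∧
      ∀ x : S, spow x N = spow (spow x N * star (spow x N)) N * spow x N) :
    ¬ ∃ e : S, e * e = e ∧ ¬ leJ e (star e * e) := by
  rintro ⟨e, hee, hn⟩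
  obtain ⟨N, hN0, hid⟩ := hB
  apply hn
  have hse : spow e N = e := spow_idem e hee N
  have h := hid e
  rw [hse] at h
  obtain ⟨u, hu⟩ := form_lemma e N hN0
  exact Or.inr (Or.inr (Or.inl ⟨u, h.trans hu⟩))

end Aux

/-- Exactly one of the following holds for a finite involutory semigroup:
(A) some idempotent `e` fails `e ≤_J e* e`; (B) for some positive `N`,
the identity `x^N = (x^N (x^N)*)^N x^N` holds. -/
theorem dichotomy_A_or_B {S : Type*} [Semigroup S] [StarMul S] [Finite S] :
    Xor'
      (∃ e : S, e * e = e ∧ ¬ leJ e (star e * e))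
      (∃ N : ℕ, 0 < N ∧
        ∀ x : S, spow x N = spow (spow x N * star (spow x N)) N * spow x N) := by
  by_cases hA : ∃ e : S, e * e = e ∧ ¬ leJ e (star e * e)
  · exact Or.inl ⟨hA, fun hB => B_imp_notA hB hA⟩
  · push_neg at hA
    refine Or.inr ⟨notA_imp_B hA, ?_⟩
    rintro ⟨e, hee, hn⟩
    exact hn (hA e hee)
end

section
/- Let S be a finite involutory semigroup in which every idempotent e satisfies e ≤_J e*·e. Then every idempotent e ∈ S satisfies: e R e·e*, e L e*·e, e* R e*·e, and e* L e·e*. -/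
/-- Green's relation `R`: `a` and `b` generate the same right ideal. -/
def rGreen {S : Type*} [Semigroup S] (a b : S) : Prop :=
  (a = b ∨ ∃ u, a = b * u) ∧ (a = b ∨ ∃ v, b = a * v)

/-- Green's relation `L`: `a` and `b` generate the same left ideal. -/
def lGreen {S : Type*} [Semigroup S] (a b : S) : Prop :=
  (a = b ∨ ∃ u, a = u * b) ∧ (a = b ∨ ∃ v, b = v * a)

section Aux

variable {S : Type*} [Semigroup S]

/-- `mypow a n = a^(n+1)` in a semigroup. -/
def mypow (a : S) (n : ℕ) : S := (fun x => a * x)^[n] a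

lemma mypow_zero (a : S) : mypow a 0 = a := rfl

lemma mypow_succ (a : S) (n : ℕ) : mypow a (n + 1) = a * mypow a n := by
  simpa [mypow] using Function.iterate_succ_apply' (fun x => a * x) n a

lemma mypow_add (a : S) (i j : ℕ) : mypow a (i + j + 1) = mypow a i * mypow a j := by
  induction i with
  | zero =>
      simpa [mypow_zero] using mypow_succ a j
  | succ i ih =>
      have h1 : i + 1 + j + 1 = (i + j + 1) + 1 := by omega
      rw [h1, mypow_succ, ih, ← mul_assoc, ← mypow_succ]

lemma exists_idem_mypow [Finite S] (a : S) :
    ∃ N, 1 ≤ N ∧ mypow a N * mypow a N = mypow a N := by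
  obtain ⟨x, y, hxy, hfeq⟩ := Finite.exists_ne_map_eq_of_infinite (mypow a)
  -- wlog m < n
  obtain ⟨m, n, hmn, heq⟩ : ∃ m n, m < n ∧ mypow a m = mypow a n := by
    rcases lt_or_gt_of_ne hxy with h' | h'
    · exact ⟨x, y, h', hfeq⟩
    · exact ⟨y, x, h', hfeq.symm⟩
  set p := n - m with hp
  have hp1 : 1 ≤ p := by omega
  have hshift : ∀ k, mypow a (m + k) = mypow a (m + p + k) := by
    intro k
    induction k with
    | zero =>
        have : m + p = n := by omega
        simpa [this] using heq
    | succ k ih =>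
        have h1 : m + (k + 1) = (m + k) + 1 := by omega
        have h2 : m + p + (k + 1) = (m + p + k) + 1 := by omega
        rw [h1, h2, mypow_succ, mypow_succ, ih]
  have hper : ∀ k c, mypow a (m + c) = mypow a (m + c + k * p) := by
    intro k
    induction k with
    | zero => intro c; simp
    | succ k ih =>
        intro c
        have h1 : m + c + (k + 1) * p = m + p + (c + k * p) := by ring
        rw [h1, ← hshift (c + k * p), ← add_assoc, ih c]
  have hle : m + 2 ≤ (m + 2) * p := Nat.le_mul_of_pos_right _ (by omega)
  set q := (m + 2) * p with hq
  refine ⟨q - 1, by omega, ?_⟩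
  set N := q - 1 with hN
  have h2N : mypow a N = mypow a (2 * N + 1) := by
    have := hper (m + 2) (N - m)
    rw [← hq] at this
    have h1 : m + (N - m) = N := by omega
    rw [h1] at this
    have h2 : N + q = 2 * N + 1 := by omega
    rwa [h2] at this
  have h3 : N + N + 1 = 2 * N + 1 := by omega
  rw [← mypow_add, h3, ← h2N]

lemma key_factor [Finite S] (a b e : S) (h : e = a * e * b) :
    ∃ s, e = s * (a * e) := by
  have hiter : ∀ k, e = mypow a k * e * mypow b k := by
    intro k
    induction k with
    | zero => simpa [mypow_zero] using h
    | succ k ih =>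
        have ha : mypow a (k + 1) = mypow a k * a := by
          simpa [mypow_zero] using mypow_add a k 0
        calc e = mypow a k * e * mypow b k := ih
          _ = mypow a k * (a * e * b) * mypow b k := by rw [← h]
          _ = (mypow a k * a) * e * (b * mypow b k) := by
              simp only [mul_assoc]
          _ = mypow a (k + 1) * e * mypow b (k + 1) := by rw [ha, mypow_succ]
  obtain ⟨N, hN1, hidem⟩ := exists_idem_mypow a
  have h1 : e = mypow a N * e := by
    calc e = mypow a N * e * mypow b N := hiter N
      _ = (mypow a N * mypow a N) * e * mypow b N := by rw [hidem]
      _ = mypow a N * (mypow a N * e * mypow b N) := by simp only [mul_assoc]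
      _ = mypow a N * e := by rw [← hiter N]
  have ha : mypow a N = mypow a (N - 1) * a := by
    have := mypow_add a (N - 1) 0
    have hN : N - 1 + 0 + 1 = N := by omega
    rw [hN, mypow_zero] at this
    exact this
  have : e = mypow a (N - 1) * (a * e) := by
    calc e = mypow a N * e := h1
      _ = (mypow a (N - 1) * a) * e := by rw [ha]
      _ = mypow a (N - 1) * (a * e) := mul_assoc _ _ _
  exact ⟨mypow a (N - 1), this⟩

/-- An idempotent `e` with `e ≤_J e* e` factors as `s * (e* e)`. -/
lemma idem_factor {S : Type*} [Semigroup S] [StarMul S] [Finite S]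
    (e : S) (he : e * e = e) (hJ : leJ e (star e * e)) :
    ∃ s, e = s * (star e * e) := by
  rcases hJ with hc | ⟨u, hc⟩ | ⟨u, hc⟩ | ⟨u, v, hc⟩
  · -- e = star e * e
    have : e = e * (star e * e) :=
      (he.symm).trans (congrArg (fun x => e * x) hc)
    exact ⟨e, this⟩
  · -- e = (star e * e) * u = star e * e * u
    exact key_factor (star e) u e hc
  · -- e = u * (star e * e); using idempotency, e = (u * star e) * e * e
    have h0 : e = (u * star e) * e := by rw [← mul_assoc] at hc; exact hc
    have h2 : e = (u * star e) * e * e :=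
      (he.symm).trans (congrArg (fun x => x * e) h0)
    obtain ⟨s, hs⟩ := key_factor (u * star e) e e h2
    refine ⟨s * u, ?_⟩
    simp only [mul_assoc] at hs ⊢
    exact hs
  · -- e = u * (star e * e) * v
    simp only [← mul_assoc] at hc
    obtain ⟨s, hs⟩ := key_factor (u * star e) v e (by
      simpa only [mul_assoc] using hc)
    refine ⟨s * u, ?_⟩
    simp only [mul_assoc] at hs ⊢
    exact hs

end Aux

/-- If every idempotent `e` of a finite involutory semigroup satisfies
`e ≤_J e* e`, then every idempotent `e` satisfies `e R e e*`, `e L e* e`,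
`e* R e* e` and `e* L e e*`. -/
theorem green_relations_of_idempotents {S : Type*} [Semigroup S] [StarMul S] [Finite S]
    (h : ∀ e : S, e * e = e → leJ e (star e * e)) :
    ∀ e : S, e * e = e →
      rGreen e (e * star e) ∧ lGreen e (star e * e) ∧
      rGreen (star e) (star e * e) ∧ lGreen (star e) (e * star e) := by
  intro e he
  have hestar : star e * star e = star e := by
    rw [← star_mul, he]
  obtain ⟨s, hs⟩ := idem_factor e he (h e he)
  obtain ⟨t, ht⟩ := idem_factor (star e) hestar (h (star e) hestar)
  rw [star_star] at ht
  -- ht : star e = t * (e * star e)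
  have hs' : star e = (star e * e) * star s := by
    calc star e = star (s * (star e * e)) := by rw [← hs]
      _ = star (star e * e) * star s := by rw [star_mul]
      _ = (star e * e) * star s := by rw [star_mul, star_star]
  have ht' : e = (e * star e) * star t := by
    calc e = star (star e) := (star_star e).symm
      _ = star (t * (e * star e)) := by rw [← ht]
      _ = star (e * star e) * star t := by rw [star_mul]
      _ = (e * star e) * star t := by rw [star_mul, star_star]
  refine ⟨⟨Or.inr ⟨star t, ht'⟩, Or.inr ⟨star e, rfl⟩⟩,
    ⟨Or.inr ⟨s, hs⟩, Or.inr ⟨star e, rfl⟩⟩,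
    ⟨Or.inr ⟨star s, hs'⟩, Or.inr ⟨e, rfl⟩⟩,
    ⟨Or.inr ⟨t, ht⟩, Or.inr ⟨e, rfl⟩⟩⟩
end

section
/- Let S be a finite involutory semigroup in which every idempotent e satisfies e ≤_J e*·e, and let x ∈ S be a regular element (x = x·y·x for some y ∈ S). Then x·x* R x and x·x* L x*. -/
section Aux

variable {S : Type*} [Semigroup S]

/-- `pw c n = c^(n+1)`. -/
def pw (c : S) : ℕ → S
  | 0 => c
  | n + 1 => c * pw c n

lemma pw_succ (c : S) (n : ℕ) : pw c (n + 1) = c * pw c n := rfl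

lemma pw_succ' (c : S) (n : ℕ) : pw c (n + 1) = pw c n * c := by
  induction n with
  | zero => rfl
  | succ n ih =>
      calc pw c (n + 1 + 1) = c * pw c (n + 1) := rfl
      _ = c * (pw c n * c) := by rw [ih]
      _ = (c * pw c n) * c := (mul_assoc _ _ _).symm
      _ = pw c (n + 1) * c := rfl

lemma pw_add (c : S) (m n : ℕ) : pw c (m + n + 1) = pw c m * pw c n := by
  induction m with
  | zero => simpa [pw] using pw_succ c n
  | succ m ih =>
      have h : m + 1 + n + 1 = (m + n + 1) + 1 := by omega
      rw [h, pw_succ, ih, ← mul_assoc, ← pw_succ]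

lemma exists_idem_pw [Finite S] (c : S) : ∃ m, pw c m * pw c m = pw c m := by
  obtain ⟨a, b, hab, heq⟩ := Finite.exists_ne_map_eq_of_infinite (pw c)
  wlog hlt : a < b generalizing a b
  · exact this b a hab.symm heq.symm (by omega)
  set d := b - a with hd
  have hd1 : 1 ≤ d := by omega
  have hba : b = a + d := by omega
  have shift : ∀ n, a ≤ n → pw c n = pw c (n + d) := by
    intro n hn
    rcases Nat.eq_or_lt_of_le hn with h0 | h0
    · rw [← h0, ← hba]; exact heq
    · obtain ⟨s, hs⟩ : ∃ s, n = a + s + 1 := ⟨n - a - 1, by omega⟩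
      have h1 : n + d = a + d + s + 1 := by omega
      rw [h1, hs, pw_add, pw_add, ← hba, ← heq]
  have mult : ∀ k n, a ≤ n → pw c n = pw c (n + k * d) := by
    intro k
    induction k with
    | zero => intro n _; simp
    | succ k ih =>
        intro n hn
        have h : n + (k + 1) * d = (n + k * d) + d := by ring
        rw [h, ← shift (n + k * d) (by omega), ← ih n hn]
  refine ⟨(a + 1) * d - 1, ?_⟩
  set m := (a + 1) * d - 1 with hm
  have hpos : a + 1 ≤ (a + 1) * d := Nat.le_mul_of_pos_right _ (by omega)
  have hm1 : m + 1 = (a + 1) * d := by omega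
  have ham : a ≤ m := by omega
  have h2 : m + m + 1 = m + (a + 1) * d := by omega
  rw [← pw_add, h2, ← mult (a + 1) m ham]

lemma stability [Finite S] (e c v : S) (h : e = c * e * v) : ∃ m, e = pw c m * e := by
  obtain ⟨m, hm⟩ := exists_idem_pw c
  have key : ∀ n, e = pw c n * e * pw v n := by
    intro n
    induction n with
    | zero => exact h
    | succ n ih =>
        calc e = pw c n * e * pw v n := ih
        _ = pw c n * (c * e * v) * pw v n := by rw [← h]
        _ = (pw c n * c) * e * (v * pw v n) := by simp only [mul_assoc]
        _ = pw c (n + 1) * e * pw v (n + 1) := by rw [pw_succ', pw_succ]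
  refine ⟨m, ?_⟩
  have h2 : pw c m * e = e := by
    calc pw c m * e = pw c m * (pw c m * e * pw v m) := by rw [← key m]
    _ = (pw c m * pw c m) * e * pw v m := by simp only [mul_assoc]
    _ = pw c m * e * pw v m := by rw [hm]
    _ = e := (key m).symm
  exact h2.symm

variable [StarMul S]

lemma pw_extract (z d : S) (m : ℕ) : ∃ w, pw (d * star z) m * z = w * (star z * z) := by
  cases m with
  | zero => exact ⟨d, by simp [pw, mul_assoc]⟩
  | succ m =>
      refine ⟨pw (d * star z) m * d, ?_⟩
      rw [pw_succ']
      simp only [mul_assoc]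

/-- Key lemma: under the hypothesis, any regular `z` lies in `S (z* z)`. -/
lemma key_lemma [Finite S]
    (h : ∀ e : S, e * e = e → leJ e (star e * e))
    (z y : S) (hz : z = z * y * z) : ∃ w, z = w * (star z * z) := by
  obtain ⟨e, he_def⟩ : ∃ e, e = z * y := ⟨z * y, rfl⟩
  have he : e * e = e := by
    rw [he_def]
    calc (z * y) * (z * y) = (z * y * z) * y := by simp only [mul_assoc]
    _ = z * y := by rw [← hz]
  have hez : e * z = z := by rw [he_def, ← hz]
  have hstar : star e = star y * star z := by rw [he_def, star_mul]
  rcases h e he with h1 | ⟨u, h2⟩ | ⟨u, h3⟩ | ⟨u, v, h4⟩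
  · -- e = e* e
    refine ⟨star y, ?_⟩
    calc z = e * z := hez.symm
    _ = (star e * e) * z := by conv_lhs => rw [h1]
    _ = star e * z := by rw [mul_assoc, hez]
    _ = star y * (star z * z) := by rw [hstar, mul_assoc]
  · -- e = (e* e) u
    obtain ⟨m, hmm⟩ := stability e (star e) u h2
    have hzz : z = pw (star e) m * z := by
      calc z = e * z := hez.symm
      _ = (pw (star e) m * e) * z := by conv_lhs => rw [hmm]
      _ = pw (star e) m * z := by rw [mul_assoc, hez]
    obtain ⟨w, hw⟩ := pw_extract z (star y) m
    rw [← hstar] at hw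
    refine ⟨w, ?_⟩
    conv_lhs => rw [hzz]
    exact hw
  · -- e = u (e* e)
    refine ⟨u * star y, ?_⟩
    calc z = e * z := hez.symm
    _ = (u * (star e * e)) * z := by conv_lhs => rw [h3]
    _ = u * (star e * (e * z)) := by simp only [mul_assoc]
    _ = u * (star e * z) := by rw [hez]
    _ = (u * star y) * (star z * z) := by rw [hstar]; simp only [mul_assoc]
  · -- e = u (e* e) v
    have hfit : e = (u * star e) * e * v := by
      conv_lhs => rw [h4]
      simp only [mul_assoc]
    obtain ⟨m, hmm⟩ := stability e (u * star e) v hfit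
    have hzz : z = pw (u * star e) m * z := by
      calc z = e * z := hez.symm
      _ = (pw (u * star e) m * e) * z := by conv_lhs => rw [hmm]
      _ = pw (u * star e) m * z := by rw [mul_assoc, hez]
    have hc : u * star e = (u * star y) * star z := by rw [hstar, mul_assoc]
    obtain ⟨w, hw⟩ := pw_extract z (u * star y) m
    rw [← hc] at hw
    refine ⟨w, ?_⟩
    conv_lhs => rw [hzz]
    exact hw

end Aux

/-- In a finite involutory semigroup in which every idempotent `e` satisfies
`e ≤_J e* e`, every regular element `x` satisfies `x x* R x` and `x x* L x*`. -/
theorem regular_element_green {S : Type*} [Semigroup S] [StarMul S] [Finite S]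
    (h : ∀ e : S, e * e = e → leJ e (star e * e))
    (x : S) (hx : ∃ y : S, x = x * y * x) :
    rGreen (x * star x) x ∧ lGreen (x * star x) (star x) := by
  obtain ⟨y, hxy⟩ := hx
  have hsx : star x = star x * star y * star x := by
    conv_lhs => rw [hxy]
    rw [star_mul, star_mul, mul_assoc]
  obtain ⟨w, hw⟩ := key_lemma h (star x) (star y) hsx
  rw [star_star] at hw
  -- hw : star x = w * (x * star x)
  have hx2 : x = (x * star x) * star w := by
    have h3 := congrArg star hw
    simp only [star_mul, star_star] at h3
    exact h3
  constructor
  · exact ⟨Or.inr ⟨star x, rfl⟩, Or.inr ⟨star w, hx2⟩⟩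
  · exact ⟨Or.inr ⟨x, rfl⟩, Or.inr ⟨w, hw⟩⟩
end
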